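/- Let θ : X_A × X_B → ℝ and let M° be the set of probability distributions τ on X_A × X_B whose X_B-marginal is a point mass, i.e., there exists x_B* with τ_B(x_B) = 1[x_B = x_B*]. Then max_{τ ∈ M°} { E_τ[θ] + H_{A|B}(τ) } = max_{x_B} log Σ_{x_A} exp(θ(x_A, x_B)); moreover, for any set N of distributions with M° ⊆ N ⊆ all distributions, the maximum over N equals the same value. -/

import Mathlib

/-!
Writing τ_B for the B-marginal, the objective splits over the fibres of X_B:
E_τ[θ] + H_{A|B}(τ) = Σ_b (Σ_a τ(a,b) (θ(a,b) - log τ(a,b)) + τ_B(b) log τ_B(b)).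
Gibbs' inequality (log x ≤ x - 1, comparing τ(·,b) with τ_B(b) times the softmax of θ(·,b))
bounds the b-th term by τ_B(b) Q(b), so the objective is at most max_b Q(b).
The softmax of θ(·,b*) placed on the fibre of a maximiser b* has a point-mass marginal and
attains the bound; as it lies in M° ⊆ N and N consists of distributions, the maximum over N
is max_b Q(b).
-/

open Real Finset

variable {XA XB : Type*} [Fintype XA] [Fintype XB] [DecidableEq XB]

noncomputable def Qfun (θ : XA × XB → ℝ) (b : XB) : ℝ :=
  Real.log (∑ a, Real.exp (θ (a, b)))

noncomputable def HAB (τ : XA × XB → ℝ) : ℝ :=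
  (-∑ x, τ x * Real.log (τ x)) -
    (-∑ b, (∑ a, τ (a, b)) * Real.log (∑ a, τ (a, b)))

def IsPMF {X : Type*} [Fintype X] (τ : X → ℝ) : Prop :=
  (∀ x, 0 ≤ τ x) ∧ ∑ x, τ x = 1

/-- Distributions whose X_B-marginal is a point mass. -/
def Mdet : Set ((XA × XB) → ℝ) :=
  {τ | IsPMF τ ∧ ∃ xB0 : XB, ∀ b, (∑ a, τ (a, b)) = if b = xB0 then 1 else 0}

section Gibbs

variable {ι : Type*} [Fintype ι]

theorem mul_sub_log_le_sub {p q : ℝ} (hp : 0 ≤ p) (hq : 0 < q) :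
    p * (log q - log p) ≤ q - p := by
  rcases hp.eq_or_lt with rfl | hp
  · simpa using hq.le
  calc p * (log q - log p) = p * log (q / p) := by rw [log_div hq.ne' hp.ne']
    _ ≤ p * (q / p - 1) := mul_le_mul_of_nonneg_left (log_le_sub_one_of_pos (by positivity)) hp.le
    _ = q - p := by field_simp

theorem sum_exp_pos [Nonempty ι] (θ : ι → ℝ) : 0 < ∑ i, exp (θ i) :=
  sum_pos (fun _ _ => exp_pos _) univ_nonempty

/-- Gibbs' inequality, scaled by the mass of the nonnegative vector `p`. -/
theorem sum_mul_sub_log_add_le (θ p : ι → ℝ) (hp : ∀ i, 0 ≤ p i) :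
    ∑ i, p i * (θ i - log (p i)) + (∑ i, p i) * log (∑ i, p i) ≤
      (∑ i, p i) * log (∑ i, exp (θ i)) := by
  set s := ∑ i, p i
  set Z := ∑ i, exp (θ i)
  rcases (sum_nonneg fun i _ => hp i : 0 ≤ s).eq_or_lt' with hs | hs
  · have hp0 : ∀ i, p i = 0 := fun i =>
      (sum_eq_zero_iff_of_nonneg fun i _ => hp i).1 hs i (mem_univ i)
    rw [show s = 0 from hs]
    simp [hp0]
  have : Nonempty ι := by
    obtain ⟨i, -, -⟩ := exists_ne_zero_of_sum_ne_zero hs.ne'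
    exact ⟨i⟩
  have hZ : 0 < Z := sum_exp_pos θ
  -- compare `p` with the rescaled softmax `q i = s * exp (θ i) / Z`, which has the same mass
  have key : ∀ i, p i * (θ i - log (p i)) + p i * log s - p i * log Z ≤
      s * exp (θ i) / Z - p i := by
    intro i
    have hq := mul_sub_log_le_sub (hp i) (by positivity : 0 < s * exp (θ i) / Z)
    rw [log_div (by positivity) hZ.ne', log_mul hs.ne' (exp_pos _).ne', log_exp] at hq
    linarith
  have hmass : ∑ i, s * exp (θ i) / Z = s := by
    rw [← sum_div, ← mul_sum, mul_div_cancel_right₀ _ hZ.ne']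
  have := sum_le_sum fun i (_ : i ∈ univ) => key i
  simp only [sum_sub_distrib, sum_add_distrib, ← sum_mul, hmass] at this
  linarith

noncomputable def gibbs (θ : ι → ℝ) (i : ι) : ℝ :=
  exp (θ i) / ∑ j, exp (θ j)

theorem gibbs_nonneg (θ : ι → ℝ) (i : ι) : 0 ≤ gibbs θ i := by
  unfold gibbs
  positivity

variable [Nonempty ι]

theorem sum_gibbs (θ : ι → ℝ) : ∑ i, gibbs θ i = 1 := by
  simp only [gibbs]
  rw [← sum_div, div_self (sum_exp_pos θ).ne']

theorem sum_gibbs_mul_sub_log (θ : ι → ℝ) :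
    ∑ i, gibbs θ i * (θ i - log (gibbs θ i)) = log (∑ i, exp (θ i)) := by
  have hlog : ∀ i, θ i - log (gibbs θ i) = log (∑ j, exp (θ j)) := fun i => by
    rw [gibbs, log_div (exp_pos _).ne' (sum_exp_pos θ).ne', log_exp]
    ring
  simp only [hlog, ← sum_mul, sum_gibbs, one_mul]

end Gibbs

section Duality

variable {α β : Type*} [Fintype α]

theorem sum_mul_add_HAB_eq_sum_fibre [Fintype β] (θ τ : α × β → ℝ) :
    ∑ x, τ x * θ x + HAB τ =
      ∑ b, (∑ a, τ (a, b) * (θ (a, b) - log (τ (a, b))) +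
        (∑ a, τ (a, b)) * log (∑ a, τ (a, b))) := by
  rw [HAB, Fintype.sum_prod_type_right (fun x => τ x * θ x),
    Fintype.sum_prod_type_right (fun x => τ x * log (τ x))]
  simp only [mul_sub, sum_sub_distrib, sum_add_distrib]
  ring

theorem sum_mul_add_HAB_le_sup'_Qfun [Fintype β] [Nonempty β] (θ τ : α × β → ℝ) (hτ : IsPMF τ) :
    ∑ x, τ x * θ x + HAB τ ≤ univ.sup' univ_nonempty (Qfun θ) := by
  obtain ⟨hτ0, hτ1⟩ := hτ
  have hmarg : ∀ b, 0 ≤ ∑ a, τ (a, b) := fun b => sum_nonneg fun a _ => hτ0 _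
  rw [Fintype.sum_prod_type_right] at hτ1
  rw [sum_mul_add_HAB_eq_sum_fibre]
  calc _ ≤ ∑ b, (∑ a, τ (a, b)) * Qfun θ b :=
        sum_le_sum fun b _ => sum_mul_sub_log_add_le _ _ fun a => hτ0 _
    _ ≤ ∑ b, (∑ a, τ (a, b)) * univ.sup' univ_nonempty (Qfun θ) :=
        sum_le_sum fun b _ => mul_le_mul_of_nonneg_left (le_sup' _ (mem_univ b)) (hmarg b)
    _ = univ.sup' univ_nonempty (Qfun θ) := by rw [← sum_mul, hτ1, one_mul]

variable [DecidableEq β]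

noncomputable def gibbsOn (θ : α × β → ℝ) (b₀ : β) (x : α × β) : ℝ :=
  if x.2 = b₀ then gibbs (fun a => θ (a, b₀)) x.1 else 0

variable [Nonempty α]

theorem sum_gibbsOn_fibre (θ : α × β → ℝ) (b₀ b : β) :
    ∑ a, gibbsOn θ b₀ (a, b) = if b = b₀ then 1 else 0 := by
  by_cases h : b = b₀
  · simp [gibbsOn, h, sum_gibbs]
  · simp [gibbsOn, h]

theorem gibbsOn_mem_Mdet [Fintype β] (θ : α × β → ℝ) (b₀ : β) : gibbsOn θ b₀ ∈ Mdet := by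
  refine ⟨⟨fun x => ?_, ?_⟩, b₀, sum_gibbsOn_fibre θ b₀⟩
  · unfold gibbsOn
    split_ifs
    exacts [gibbs_nonneg _ _, le_rfl]
  · simp [Fintype.sum_prod_type_right, sum_gibbsOn_fibre]

theorem sum_mul_add_HAB_gibbsOn [Fintype β] (θ : α × β → ℝ) (b₀ : β) :
    ∑ x, gibbsOn θ b₀ x * θ x + HAB (gibbsOn θ b₀) = Qfun θ b₀ := by
  rw [sum_mul_add_HAB_eq_sum_fibre, sum_eq_single b₀]
  · simp [gibbsOn, sum_gibbs, sum_gibbs_mul_sub_log, Qfun]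
  · intro b _ hb
    simp [gibbsOn, hb]
  · simp

end Duality

/-- The dual optimization remains exact when restricted to any set N with
M° ⊆ N ⊆ M: the maximum of E_τ[θ] + H_{A|B}(τ) over N equals max_{x_B} Q(x_B). -/
theorem restricted_duality [Nonempty XA] [Nonempty XB] (θ : XA × XB → ℝ)
    (N : Set ((XA × XB) → ℝ)) (hMN : Mdet ⊆ N) (hNM : N ⊆ {τ | IsPMF τ}) :
    IsGreatest {v | ∃ τ ∈ N, v = (∑ x, τ x * θ x) + HAB τ}
      (Finset.univ.sup' Finset.univ_nonempty (Qfun θ)) := by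
  obtain ⟨b₀, -, hb₀⟩ := exists_mem_eq_sup' univ_nonempty (Qfun θ)
  refine ⟨⟨gibbsOn θ b₀, hMN (gibbsOn_mem_Mdet θ b₀), ?_⟩, ?_⟩
  · rw [hb₀, sum_mul_add_HAB_gibbsOn]
  · rintro v ⟨τ, hτ, rfl⟩
    exact sum_mul_add_HAB_le_sup'_Qfun θ τ (hNM hτ)
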